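/- Let L be any of the modal systems K_nD, D_nD, T_nD, K45_nD, KD45_nD, S5_nD. If dforget_L(δ,p) exists for every atom p and every L-satisfiable d-canonical formula δ, then L is closed under forgetting, i.e., dforget_L(φ,p) exists for every L-satisfiable formula φ and every atom p; moreover dforget_L(φ,p) ≡_L ⋁_{δ∈Φ} dforget_L(δ,p) where Φ = {δ ∈ D^P_{dep(φ)}(L) : δ ⊨_L φ} and P is the set of atoms of φ. -/

import Mathlib

/-!
Common framework: multi-agent epistemic modal logic with distributed knowledge.
Agents are `Fin n`, atoms are natural numbers.
-/

namespace DKLogic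

/-- Formulas of the language `L_D`: atoms, negation, conjunction, disjunction and the
distributed-knowledge modality `D_B` for nonempty sets `B` of agents (together with the
constants `⊤`/`⊥`, which the paper uses as the empty conjunction/disjunction). -/
inductive Formula (n : ℕ) : Type
  | top : Formula n
  | bot : Formula n
  | atom : ℕ → Formula n
  | neg : Formula n → Formula n
  | and : Formula n → Formula n → Formula n
  | or : Formula n → Formula n → Formula n
  | D : {B : Finset (Fin n) // B.Nonempty} → Formula n → Formula n

namespace Formula

/-- Modal depth of a formula. -/
def depth {n : ℕ} : Formula n → ℕ
  | top => 0
  | bot => 0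
  | atom _ => 0
  | neg φ => depth φ
  | and φ ψ => max (depth φ) (depth ψ)
  | or φ ψ => max (depth φ) (depth ψ)
  | D _ φ => depth φ + 1

/-- The atoms occurring in a formula. -/
def atoms {n : ℕ} : Formula n → Finset ℕ
  | top => ∅
  | bot => ∅
  | atom q => {q}
  | neg φ => atoms φ
  | and φ ψ => atoms φ ∪ atoms ψ
  | or φ ψ => atoms φ ∪ atoms ψ
  | D _ φ => atoms φ

end Formula

/-- A Kripke model over world type `W` with `n` agents. -/
structure KModel (n : ℕ) (W : Type) where
  R : Fin n → W → W → Prop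
  V : W → Set ℕ

/-- The distributed accessibility relation `R_B = ⋂_{i ∈ B} R_i`. -/
def KModel.RB {n : ℕ} {W : Type} (M : KModel n W) (B : Finset (Fin n)) (s t : W) : Prop :=
  ∀ i ∈ B, M.R i s t

/-- Satisfaction. -/
def Sat {n : ℕ} {W : Type} (M : KModel n W) : W → Formula n → Prop
  | _, .top => True
  | _, .bot => False
  | s, .atom q => q ∈ M.V s
  | s, .neg φ => ¬ Sat M s φ
  | s, .and φ ψ => Sat M s φ ∧ Sat M s ψ
  | s, .or φ ψ => Sat M s φ ∨ Sat M s ψ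
  | s, .D B φ => ∀ t : W, M.RB B.1 s t → Sat M t φ

/-- Seriality of a relation. -/
def Serial {W : Type} (R : W → W → Prop) : Prop := ∀ x, ∃ y, R x y

/-- Euclideanness of a relation. -/
def Euclidean {W : Type} (R : W → W → Prop) : Prop := ∀ x y z, R x y → R x z → R y z

/-- The six modal systems. -/
inductive MSys : Type
  | K | D | T | K45 | KD45 | S5

/-- `L`-models: frame conditions on each accessibility relation for each system. -/
def IsModel {n : ℕ} {W : Type} : MSys → KModel n W → Prop
  | .K, _ => True
  | .D, M => ∀ i, Serial (M.R i)
  | .T, M => ∀ i, Reflexive (M.R i)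
  | .K45, M => ∀ i, Transitive (M.R i) ∧ Euclidean (M.R i)
  | .KD45, M => ∀ i, Serial (M.R i) ∧ Transitive (M.R i) ∧ Euclidean (M.R i)
  | .S5, M => ∀ i, Reflexive (M.R i) ∧ Transitive (M.R i) ∧ Euclidean (M.R i)

/-- Semantic consequence over `L`-models. -/
def Entails {n : ℕ} (L : MSys) (φ ψ : Formula n) : Prop :=
  ∀ (W : Type) (M : KModel n W), IsModel L M → ∀ s : W, Sat M s φ → Sat M s ψ

/-- Semantic equivalence over `L`-models. -/
def EquivL {n : ℕ} (L : MSys) (φ ψ : Formula n) : Prop :=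
  Entails L φ ψ ∧ Entails L ψ φ

/-- `L`-satisfiability. -/
def SatL {n : ℕ} (L : MSys) (φ : Formula n) : Prop :=
  ∃ (W : Type) (M : KModel n W) (s : W), IsModel L M ∧ Sat M s φ

/-- Collective `p`-bisimulation between two pointed models. -/
def CollPBisim {n : ℕ} {W W' : Type} (M : KModel n W) (s : W) (M' : KModel n W') (s' : W')
    (p : ℕ) : Prop :=
  ∃ ρ : W → W' → Prop, ρ s s' ∧
    ∀ u u', ρ u u' →
      ((∀ q : ℕ, q ≠ p → (q ∈ M.V u ↔ q ∈ M'.V u')) ∧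
       (∀ B : Finset (Fin n), B.Nonempty → ∀ v, M.RB B u v → ∃ v', M'.RB B u' v' ∧ ρ v v') ∧
       (∀ B : Finset (Fin n), B.Nonempty → ∀ v', M'.RB B u' v' → ∃ v, M.RB B u v ∧ ρ v v'))

/-- `ψ` is a result of forgetting `p` in `φ` in system `L`
(written `dforget_L(φ,p) ≡_L ψ` in the paper). -/
def IsForget {n : ℕ} (L : MSys) (φ : Formula n) (p : ℕ) (ψ : Formula n) : Prop :=
  ψ.atoms ⊆ φ.atoms.erase p ∧
  (∀ (W W' : Type) (M : KModel n W) (M' : KModel n W') (s : W) (s' : W'),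
      IsModel L M → IsModel L M' → Sat M s φ → CollPBisim M s M' s' p → Sat M' s' ψ) ∧
  (∀ (W' : Type) (M' : KModel n W') (s' : W'),
      IsModel L M' → Sat M' s' ψ →
      ∃ (W : Type) (M : KModel n W) (s : W), IsModel L M ∧ Sat M s φ ∧ CollPBisim M s M' s' p)

/-- `L` is closed under forgetting: `dforget_L(φ,p)` exists (as an `L`-satisfiable formula)
for every `L`-satisfiable `φ` and every atom `p`. -/
def ClosedUnderForgetting {n : ℕ} (L : MSys) : Prop :=
  ∀ (φ : Formula n) (p : ℕ), SatL L φ → ∃ ψ : Formula n, SatL L ψ ∧ IsForget L φ p ψ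

/-- `ψ` is a uniform interpolant of `φ` in `L` over `P \ {p}`. -/
def IsUI {n : ℕ} (L : MSys) (P : Finset ℕ) (p : ℕ) (φ ψ : Formula n) : Prop :=
  SatL L ψ ∧ ψ.atoms ⊆ P.erase p ∧
  ∀ χ : Formula n, p ∉ χ.atoms → (Entails L φ χ ↔ Entails L ψ χ)

/-- The uniform interpolation property for the system `L`. -/
def HasUIP {n : ℕ} (L : MSys) : Prop :=
  ∀ (P : Finset ℕ) (p : ℕ) (φ : Formula n),
    p ∈ P → φ.atoms ⊆ P → SatL L φ → ∃ ψ : Formula n, IsUI L P p φ ψ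

/-! ### Canonical formulas -/

/-- Big conjunction of a list of formulas (`⊤` for the empty list). -/
def bigAnd {n : ℕ} : List (Formula n) → Formula n
  | [] => .top
  | φ :: l => .and φ (bigAnd l)

/-- Big disjunction of a list of formulas (`⊥` for the empty list). -/
def bigOr {n : ℕ} : List (Formula n) → Formula n
  | [] => .bot
  | φ :: l => .or φ (bigOr l)

/-- An injective numerical code of formulas, used to fix a canonical ordering. -/
def fcode {n : ℕ} : Formula n → ℕ
  | .top => Nat.pair 0 0
  | .bot => Nat.pair 1 0
  | .atom q => Nat.pair 2 q
  | .neg φ => Nat.pair 3 (fcode φ)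
  | .and φ ψ => Nat.pair 4 (Nat.pair (fcode φ) (fcode ψ))
  | .or φ ψ => Nat.pair 5 (Nat.pair (fcode φ) (fcode ψ))
  | .D B φ => Nat.pair 6 (Nat.pair (B.1.sum fun i => 2 ^ (i : ℕ)) (fcode φ))

/-- Insert a formula into a strictly `fcode`-sorted list (dropping duplicates). -/
def insertF {n : ℕ} (φ : Formula n) : List (Formula n) → List (Formula n)
  | [] => [φ]
  | ψ :: l =>
      if fcode φ < fcode ψ then φ :: ψ :: l
      else if fcode φ = fcode ψ then ψ :: l
      else ψ :: insertF φ l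

/-- The canonical (sorted, duplicate-free) list representing the set of formulas in `l`. -/
def normList {n : ℕ} (l : List (Formula n)) : List (Formula n) := l.foldr insertF []

/-- The minterm of `P` that is positive exactly on `S`. -/
def minterm {n : ℕ} (P S : Finset ℕ) : Formula n :=
  bigAnd ((P.sort (· ≤ ·)).map fun q =>
    if q ∈ S then Formula.atom q else Formula.neg (Formula.atom q))

/-- The subset of `Fin n` whose characteristic bits are those of `m`. -/
def natToFinset (n m : ℕ) : Finset (Fin n) :=
  Finset.univ.filter fun i => m.testBit (i : ℕ)

/-- A canonical enumeration of all nonempty subsets of the agent set. -/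
def neSubsets (n : ℕ) : List {B : Finset (Fin n) // B.Nonempty} :=
  ((List.range (2 ^ n)).map (natToFinset n)).filterMap fun B =>
    if h : B.Nonempty then some ⟨B, h⟩ else none

/-- `∇_B Φ = D_B (⋁Φ) ∧ ⋀_{φ ∈ Φ} ¬ D_B ¬ φ`. -/
def nabla {n : ℕ} (B : {B : Finset (Fin n) // B.Nonempty}) (Φ : List (Formula n)) : Formula n :=
  Formula.and (Formula.D B (bigOr Φ))
    (bigAnd (Φ.map fun φ => Formula.neg (Formula.D B (Formula.neg φ))))

/-- Underlying data of a d-canonical formula: a set of (positive) atoms together with,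
for every set `B` of agents, a list of successor data. -/
inductive CData (n : ℕ) : Type
  | mk (S : Finset ℕ) (succ : Finset (Fin n) → List (CData n)) : CData n

/-- The positive-atom component. -/
def CData.S {n : ℕ} : CData n → Finset ℕ
  | mk S _ => S

/-- The `B`-successor data. -/
def CData.succ {n : ℕ} : CData n → Finset (Fin n) → List (CData n)
  | mk _ f => f

/-- The d-canonical formula of depth `k` over `P` determined by the data `d`:
`δ_0 ∧ ⋀_{B} ∇_B Φ_B`. -/
def toFormula {n : ℕ} (P : Finset ℕ) : ℕ → CData n → Formula n
  | 0, d => minterm P (d.S ∩ P)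
  | (k+1), d =>
      Formula.and (minterm P (d.S ∩ P))
        (bigAnd ((neSubsets n).map fun B =>
          nabla B (normList ((d.succ B.1).map fun c => toFormula P k c))))

/-- `D^P_k`: the set of d-canonical formulas of depth `k` over `P`. -/
def DP {n : ℕ} (P : Finset ℕ) (k : ℕ) : Set (Formula n) := Set.range (toFormula P k)

/-- `R_B(δ)` for `δ` the level-`k` canonical formula with data `d`:
the set of `B`-successor canonical formulas (of level `k - 1`). -/
def RBset {n : ℕ} (P : Finset ℕ) (k : ℕ) (d : CData n) (B : Finset (Fin n)) :
    Set (Formula n) :=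
  {φ | ∃ c ∈ d.succ B, φ = toFormula P (k - 1) c}

/-- One pruning step `δ ↦ δ^↓` on data (first argument: the level of the input). -/
def downD {n : ℕ} : ℕ → CData n → CData n
  | 0, d => d
  | 1, d => CData.mk d.S (fun _ => [])
  | (k+2), d => CData.mk d.S (fun B => (d.succ B).map fun c => downD (k+1) c)

/-- `l`-fold pruning `δ ↦ δ^{↓l}` on data (first argument: the level of the input). -/
def downIter {n : ℕ} : ℕ → ℕ → CData n → CData n
  | _, 0, d => d
  | k, (l+1), d => downIter (k-1) l (downD k d)

/-- Truncation `δ ↦ δ^{↑l}` on data (first argument: the level of the input). -/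
def upD {n : ℕ} : ℕ → ℕ → CData n → CData n
  | _, 0, d => CData.mk d.S (fun _ => [])
  | 0, (_+1), d => d
  | (k+1), (l+1), d => CData.mk d.S (fun B => (d.succ B).map fun c => upD k l c)

/-- The canonical formula `δ` of level `k` with data `d`. -/
def cf {n : ℕ} (P : Finset ℕ) (k : ℕ) (d : CData n) : Formula n := toFormula P k d

/-- `δ^{↓l}` (a canonical formula of level `k - l`). -/
def cfDown {n : ℕ} (P : Finset ℕ) (k l : ℕ) (d : CData n) : Formula n :=
  toFormula P (k - l) (downIter k l d)

/-- `δ^{↑l}` (a canonical formula of level `min k l`). -/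
def cfUp {n : ℕ} (P : Finset ℕ) (k l : ℕ) (d : CData n) : Formula n :=
  toFormula P (min k l) (upD k l d)

/-- Literal elimination: `φ^p` replaces every occurrence of `¬p` by `⊤` and subsequently
every remaining occurrence of `p` by `⊤`. -/
def elim {n : ℕ} (p : ℕ) : Formula n → Formula n
  | .top => .top
  | .bot => .bot
  | .atom q => if q = p then .top else .atom q
  | .neg (.atom q) => if q = p then .top else .neg (.atom q)
  | .neg φ => .neg (elim p φ)
  | .and φ ψ => .and (elim p φ) (elim p ψ)
  | .or φ ψ => .or (elim p φ) (elim p ψ)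
  | .D B φ => .D B (elim p φ)

/-!
Let `P` be the atoms and `k` the depth of `φ`. Every pointed model satisfies some member of
`D^P_k`: the one recording its `P`-valuation and, for each `B`, the members of `D^P_{k-1}` realised
at its `R_B`-successors. Two pointed models satisfying the same member of `D^P_k` agree on all
formulas of depth at most `k` over `P`. Hence `φ` is `L`-equivalent to the disjunction of the
`L`-satisfiable members of `D^P_k` entailing it, which is finite because `D^P_k` is, and a
disjunction of results of forgetting is a result of forgetting in the disjunction.
-/

section

variable {n : ℕ} {W W' : Type} {P : Finset ℕ}

lemma sat_bigAnd {M : KModel n W} {s : W} {l : List (Formula n)} :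
    Sat M s (bigAnd l) ↔ ∀ φ ∈ l, Sat M s φ := by
  induction l with
  | nil => simp [bigAnd, Sat]
  | cons φ l ih => simp [bigAnd, Sat, ih]

lemma sat_bigOr {M : KModel n W} {s : W} {l : List (Formula n)} :
    Sat M s (bigOr l) ↔ ∃ φ ∈ l, Sat M s φ := by
  induction l with
  | nil => simp [bigOr, Sat]
  | cons φ l ih => simp [bigOr, Sat, ih]

lemma atoms_bigAnd_subset {l : List (Formula n)} (h : ∀ φ ∈ l, φ.atoms ⊆ P) :
    (bigAnd l).atoms ⊆ P := by
  induction l with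
  | nil => simp [bigAnd, Formula.atoms]
  | cons φ l ih => simp_all [bigAnd, Formula.atoms, Finset.union_subset_iff]

lemma atoms_bigOr_subset {l : List (Formula n)} (h : ∀ φ ∈ l, φ.atoms ⊆ P) :
    (bigOr l).atoms ⊆ P := by
  induction l with
  | nil => simp [bigOr, Formula.atoms]
  | cons φ l ih => simp_all [bigOr, Formula.atoms, Finset.union_subset_iff]

lemma sat_minterm_iff {M : KModel n W} {s : W} {T : Finset ℕ} :
    Sat M s (minterm (n := n) P T) ↔ ∀ q ∈ P, (q ∈ M.V s ↔ q ∈ T) := by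
  simp only [minterm, sat_bigAnd, List.forall_mem_map, Finset.mem_sort]
  refine forall₂_congr fun q _ => ?_
  by_cases hq : q ∈ T <;> simp [hq, Sat]

lemma atoms_minterm_subset {T : Finset ℕ} : (minterm (n := n) P T).atoms ⊆ P := by
  refine atoms_bigAnd_subset ?_
  simp only [List.forall_mem_map, Finset.mem_sort]
  intro q hq
  split_ifs <;> simpa [Formula.atoms] using hq

lemma sat_nabla_iff {M : KModel n W} {s : W} {B : {B : Finset (Fin n) // B.Nonempty}}
    {Φ : List (Formula n)} :
    Sat M s (nabla B Φ) ↔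
      (∀ t, M.RB B.1 s t → ∃ γ ∈ Φ, Sat M t γ) ∧ ∀ γ ∈ Φ, ∃ t, M.RB B.1 s t ∧ Sat M t γ := by
  simp [nabla, Sat, sat_bigOr, sat_bigAnd]

lemma atoms_nabla_subset {B : {B : Finset (Fin n) // B.Nonempty}} {Φ : List (Formula n)}
    (h : ∀ γ ∈ Φ, γ.atoms ⊆ P) : (nabla B Φ).atoms ⊆ P := by
  simp only [nabla, Formula.atoms, Finset.union_subset_iff]
  exact ⟨atoms_bigOr_subset h, atoms_bigAnd_subset (by simpa [Formula.atoms] using h)⟩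

lemma fcode_injective : Function.Injective (fcode (n := n)) := by
  intro φ ψ h
  induction φ generalizing ψ <;> cases ψ <;> simp [fcode, Nat.pair_eq_pair] at h ⊢
  case atom.atom => exact h
  case neg.neg φ ih ψ => exact ih h
  case and.and φ₁ φ₂ ih₁ ih₂ ψ₁ ψ₂ => exact ⟨ih₁ h.1, ih₂ h.2⟩
  case or.or φ₁ φ₂ ih₁ ih₂ ψ₁ ψ₂ => exact ⟨ih₁ h.1, ih₂ h.2⟩
  case D.D B φ ih B' ψ =>
    refine ⟨Subtype.ext ?_, ih h.2⟩
    apply Finset.map_injective Fin.valEmbedding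
    apply Finset.geomSum_injective le_rfl
    simpa using h.1

lemma mem_insertF {φ ψ : Formula n} {l : List (Formula n)} :
    ψ ∈ insertF φ l ↔ ψ = φ ∨ ψ ∈ l := by
  induction l with
  | nil => simp [insertF]
  | cons χ l ih =>
    unfold insertF
    split_ifs with hlt heq
    · simp
    · simp [fcode_injective heq]
    · simp only [List.mem_cons, ih]
      tauto

lemma mem_normList {l : List (Formula n)} {φ : Formula n} : φ ∈ normList l ↔ φ ∈ l := by
  induction l with
  | nil => simp [normList]
  | cons ψ l ih => simp [normList, mem_insertF, ← ih]

lemma pairwise_insertF {φ : Formula n} {l : List (Formula n)}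
    (h : l.Pairwise (fcode · < fcode ·)) : (insertF φ l).Pairwise (fcode · < fcode ·) := by
  induction l with
  | nil => simp [insertF]
  | cons ψ l ih =>
    rw [List.pairwise_cons] at h
    unfold insertF
    split_ifs with hlt heq
    · exact .cons (by simpa using ⟨hlt, fun χ hχ => hlt.trans (h.1 χ hχ)⟩) (.cons h.1 h.2)
    · exact .cons h.1 h.2
    · refine .cons (fun χ hχ => ?_) (ih h.2)
      rcases mem_insertF.1 hχ with rfl | hχ
      · exact lt_of_le_of_ne (not_lt.1 hlt) (Ne.symm heq)
      · exact h.1 χ hχ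

lemma pairwise_normList (l : List (Formula n)) : (normList l).Pairwise (fcode · < fcode ·) := by
  induction l with
  | nil => simp [normList]
  | cons φ l ih => exact pairwise_insertF ih

lemma normList_eq_of_mem_iff {l l' : List (Formula n)} (h : ∀ φ, φ ∈ l ↔ φ ∈ l') :
    normList l = normList l' := by
  have : Std.Irrefl (fun φ ψ : Formula n => fcode φ < fcode ψ) := ⟨fun _ => lt_irrefl _⟩
  have : Std.Antisymm (fun φ ψ : Formula n => fcode φ < fcode ψ) :=
    ⟨fun _ _ h h' => absurd (h.trans h') (lt_irrefl _)⟩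
  exact (pairwise_normList l).eq_of_mem_iff (pairwise_normList l') (by simpa [mem_normList])

lemma mem_neSubsets (B : {B : Finset (Fin n) // B.Nonempty}) : B ∈ neSubsets n := by
  set m := ∑ i ∈ B.1.map Fin.valEmbedding, 2 ^ i
  have hm : m < 2 ^ n := Nat.geomSum_lt le_rfl (by simp)
  have hB : natToFinset n m = B.1 := by
    ext i
    rw [natToFinset, Finset.mem_filter, ← Nat.mem_bitIndices, ← List.mem_toFinset,
      Finset.toFinset_bitIndices_sum_two_pow]
    simp [Fin.val_inj]
  simp only [neSubsets, List.mem_filterMap, List.mem_map, List.mem_range]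
  exact ⟨B.1, ⟨m, hm, hB⟩, by simp [B.2]⟩

variable (P) in
lemma atoms_toFormula_subset (k : ℕ) (d : CData n) :
    (toFormula P k d).atoms ⊆ P := by
  induction k generalizing d with
  | zero => exact atoms_minterm_subset
  | succ k ih =>
    simp only [toFormula, Formula.atoms, Finset.union_subset_iff]
    refine ⟨atoms_minterm_subset, atoms_bigAnd_subset ?_⟩
    simp only [List.forall_mem_map]
    exact fun B _ => atoms_nabla_subset fun γ hγ => by
      obtain ⟨c, -, rfl⟩ := List.mem_map.1 (mem_normList.1 hγ)
      exact ih c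

lemma mem_valuation_iff_of_sat_toFormula {M : KModel n W} {s : W} {k : ℕ} {d : CData n}
    (h : Sat M s (toFormula P k d)) {q : ℕ} (hq : q ∈ P) : q ∈ M.V s ↔ q ∈ d.S := by
  have hmin : Sat M s (minterm P (d.S ∩ P)) := by
    cases k with
    | zero => exact h
    | succ k => exact h.1
  simpa [hq] using sat_minterm_iff.1 hmin q hq

lemma sat_toFormula_succ_iff {M : KModel n W} {s : W} {k : ℕ} {d : CData n} :
    Sat M s (toFormula P (k + 1) d) ↔
      (∀ q ∈ P, (q ∈ M.V s ↔ q ∈ d.S)) ∧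
      ∀ B : {B : Finset (Fin n) // B.Nonempty},
        (∀ t, M.RB B.1 s t → ∃ c ∈ d.succ B.1, Sat M t (toFormula P k c)) ∧
        ∀ c ∈ d.succ B.1, ∃ t, M.RB B.1 s t ∧ Sat M t (toFormula P k c) := by
  rw [toFormula, Sat, sat_minterm_iff, sat_bigAnd, List.forall_mem_map]
  simp only [sat_nabla_iff, mem_normList, List.mem_map, exists_exists_and_eq_and,
    forall_exists_index, and_imp, forall_apply_eq_imp_iff₂, Finset.mem_inter]
  refine and_congr (forall₂_congr fun q hq => by simp [hq]) ?_
  exact ⟨fun h B => h B (mem_neSubsets B), fun h B _ => h B⟩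

theorem sat_iff_of_sat_toFormula {φ : Formula n} {k : ℕ} (hk : φ.depth ≤ k)
    (hP : φ.atoms ⊆ P) {d : CData n} {M : KModel n W} {s : W} {M' : KModel n W'} {s' : W'}
    (h : Sat M s (toFormula P k d)) (h' : Sat M' s' (toFormula P k d)) :
    Sat M s φ ↔ Sat M' s' φ := by
  induction φ generalizing k d W W' with
  | top | bot => rfl
  | atom q =>
    have hq : q ∈ P := hP (Finset.mem_singleton_self q)
    exact (mem_valuation_iff_of_sat_toFormula h hq).trans
      (mem_valuation_iff_of_sat_toFormula h' hq).symm
  | neg φ ih => exact not_congr (ih hk hP h h')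
  | and φ ψ ihφ ihψ =>
    simp only [Formula.depth, max_le_iff] at hk
    simp only [Formula.atoms, Finset.union_subset_iff] at hP
    exact and_congr (ihφ hk.1 hP.1 h h') (ihψ hk.2 hP.2 h h')
  | or φ ψ ihφ ihψ =>
    simp only [Formula.depth, max_le_iff] at hk
    simp only [Formula.atoms, Finset.union_subset_iff] at hP
    exact or_congr (ihφ hk.1 hP.1 h h') (ihψ hk.2 hP.2 h h')
  | D B φ ih =>
    obtain ⟨k, rfl⟩ : ∃ j, k = j + 1 := Nat.exists_eq_add_one.2 (Nat.zero_lt_of_lt hk)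
    have transfer : ∀ {W₁ W₂ : Type} {M₁ : KModel n W₁} {s₁ : W₁} {M₂ : KModel n W₂} {s₂ : W₂},
        Sat M₁ s₁ (toFormula P (k + 1) d) → Sat M₂ s₂ (toFormula P (k + 1) d) →
        Sat M₁ s₁ (.D B φ) → Sat M₂ s₂ (.D B φ) := by
      intro W₁ W₂ M₁ s₁ M₂ s₂ h₁ h₂ hD t₂ ht₂
      obtain ⟨c, hc, ht₂c⟩ := ((sat_toFormula_succ_iff.1 h₂).2 B).1 t₂ ht₂
      obtain ⟨t₁, ht₁, ht₁c⟩ := ((sat_toFormula_succ_iff.1 h₁).2 B).2 c hc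
      exact (ih (Nat.le_of_succ_le_succ hk) hP ht₁c ht₂c).1 (hD t₁ ht₁)
    exact ⟨transfer h h', transfer h' h⟩

variable (P) in
theorem finite_DP (k : ℕ) : (DP (n := n) P k).Finite := by
  induction k with
  | zero =>
    refine (P.powerset.finite_toSet.image (minterm P)).subset ?_
    rintro _ ⟨d, rfl⟩
    exact ⟨d.S ∩ P, by simp, rfl⟩
  | succ k ih =>
    classical
    let build : Finset ℕ × (Finset (Fin n) → Finset (Formula n)) → Formula n := fun x =>
      .and (minterm P x.1) (bigAnd ((neSubsets n).map fun B => nabla B (normList (x.2 B.1).toList)))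
    refine (((P.powerset.finite_toSet).prod
      (Set.Finite.pi' fun _ => ih.toFinset.powerset.finite_toSet)).image build).subset ?_
    rintro _ ⟨d, rfl⟩
    refine ⟨(d.S ∩ P, fun B => ((d.succ B).map (toFormula P k)).toFinset), ?_, ?_⟩
    · simp only [Set.mem_prod, Finset.coe_powerset, Set.mem_preimage, Set.mem_powerset_iff,
        Finset.coe_subset, Finset.inter_subset_right, Set.mem_ofPred_eq, true_and]
      intro B γ hγ
      obtain ⟨c, -, rfl⟩ := List.mem_map.1 (List.mem_toFinset.1 hγ)
      exact ih.mem_toFinset.2 (Set.mem_range_self c)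
    -- `toFormula` sees each successor list only up to membership, through `normList`.
    · simp only [build, toFormula]
      congr 3
      funext B
      exact congrArg _ (normList_eq_of_mem_iff (by simp))

variable (P) in
theorem exists_mem_DP_sat (M : KModel n W) (k : ℕ) (s : W) :
    ∃ δ ∈ DP P k, Sat M s δ := by
  classical
  induction k generalizing s with
  | zero =>
    refine ⟨toFormula P 0 (.mk {q ∈ P | q ∈ M.V s} fun _ => []), ⟨_, rfl⟩, ?_⟩
    exact sat_minterm_iff.2 fun q hq => by simp [CData.S, hq]
  | succ k ih =>
    have successors : ∀ B : Finset (Fin n), ∃ l : List (CData n), ∀ γ,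
        γ ∈ l.map (toFormula P k) ↔ γ ∈ DP P k ∧ ∃ t, M.RB B s t ∧ Sat M t γ := by
      intro B
      have hfin := (finite_DP P k).subset (Set.sep_subset (DP P k) fun γ =>
        ∃ t, M.RB B s t ∧ Sat M t γ)
      obtain ⟨l, hl⟩ : hfin.toFinset.toList ∈ Set.range (List.map (toFormula P k)) := by
        rw [Set.range_list_map]
        exact fun γ hγ => (hfin.mem_toFinset.1 (Finset.mem_toList.1 hγ)).1
      exact ⟨l, fun γ => by rw [hl, Finset.mem_toList, hfin.mem_toFinset]; rfl⟩
    choose succ hsucc using successors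
    refine ⟨toFormula P (k + 1) (.mk {q ∈ P | q ∈ M.V s} succ), ⟨_, rfl⟩,
      sat_toFormula_succ_iff.2 ⟨fun q hq => by simp [CData.S, hq], fun B => ⟨?_, ?_⟩⟩⟩
    · intro t ht
      obtain ⟨δ, hδ, htδ⟩ := ih t
      obtain ⟨c, hc, rfl⟩ := List.mem_map.1 ((hsucc B.1 δ).2 ⟨hδ, t, ht, htδ⟩)
      exact ⟨c, hc, htδ⟩
    · exact fun c hc => ((hsucc B.1 _).1 (List.mem_map_of_mem hc)).2

variable {L : MSys} {φ : Formula n} {Δ : List (Formula n)}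

theorem entails_of_sat_of_mem_DP {M : KModel n W} {s : W} {δ : Formula n}
    (hδ : δ ∈ DP φ.atoms φ.depth) (hsδ : Sat M s δ) (hsφ : Sat M s φ) : Entails L δ φ := by
  obtain ⟨d, rfl⟩ := hδ
  exact fun _ _ _ t htδ => (sat_iff_of_sat_toFormula le_rfl subset_rfl htδ hsδ).2 hsφ

theorem exists_mem_sat_of_sat
    (hΔ : ∀ δ, δ ∈ Δ ↔ δ ∈ DP φ.atoms φ.depth ∧ SatL L δ ∧ Entails L δ φ)
    {M : KModel n W} (hM : IsModel L M) {s : W} (hs : Sat M s φ) : ∃ δ ∈ Δ, Sat M s δ := by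
  obtain ⟨δ, hδ, hsδ⟩ := exists_mem_DP_sat φ.atoms M φ.depth s
  exact ⟨δ, (hΔ δ).2 ⟨hδ, ⟨W, M, s, hM, hsδ⟩, entails_of_sat_of_mem_DP hδ hsδ hs⟩, hsδ⟩

theorem isForget_bigOr {p : ℕ} {g : Formula n → Formula n}
    (hΔ : ∀ δ, δ ∈ Δ ↔ δ ∈ DP φ.atoms φ.depth ∧ SatL L δ ∧ Entails L δ φ)
    (hg : ∀ δ ∈ Δ, IsForget L δ p (g δ)) : IsForget L φ p (bigOr (Δ.map g)) := by
  refine ⟨atoms_bigOr_subset ?_, ?_, ?_⟩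
  · simp only [List.forall_mem_map]
    intro δ hδ
    obtain ⟨⟨d, rfl⟩, -⟩ := (hΔ _).1 hδ
    exact (hg _ hδ).1.trans (Finset.erase_subset_erase p (atoms_toFormula_subset _ _ d))
  · intro W W' M M' s s' hM hM' hs hbisim
    obtain ⟨δ, hδ, hsδ⟩ := exists_mem_sat_of_sat hΔ hM hs
    exact sat_bigOr.2 ⟨g δ, List.mem_map_of_mem hδ, (hg δ hδ).2.1 W W' M M' s s' hM hM' hsδ hbisim⟩
  · intro W' M' s' hM' hs'
    obtain ⟨_, hψ, hs'ψ⟩ := sat_bigOr.1 hs'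
    obtain ⟨δ, hδ, rfl⟩ := List.mem_map.1 hψ
    obtain ⟨W, M, s, hM, hsδ, hbisim⟩ := (hg δ hδ).2.2 W' M' s' hM' hs'ψ
    exact ⟨W, M, s, hM, ((hΔ δ).1 hδ).2.2 W M hM s hsδ, hbisim⟩

end

/-- if forgetting results exist for all satisfiable d-canonical formulas,
then `L` is closed under forgetting, and the result of forgetting in `φ` is the
disjunction of the results for the canonical formulas entailing `φ`. -/
theorem closed_under_forgetting_of_canonical {n : ℕ} (L : MSys)
    (H : ∀ (P : Finset ℕ) (k : ℕ) (δ : Formula n) (p : ℕ),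
        δ ∈ DP P k → SatL L δ → ∃ ψ : Formula n, SatL L ψ ∧ IsForget L δ p ψ) :
    ClosedUnderForgetting (n := n) L ∧
    ∀ (φ : Formula n) (p : ℕ), SatL L φ →
      ∀ (Δ : List (Formula n)) (g : Formula n → Formula n),
        (∀ δ : Formula n,
          δ ∈ Δ ↔ (δ ∈ DP φ.atoms φ.depth ∧ SatL L δ ∧ Entails L δ φ)) →
        (∀ δ ∈ Δ, IsForget L δ p (g δ)) →
        IsForget L φ p (bigOr (Δ.map g)) := by
  refine ⟨fun φ p hφ => ?_, fun φ p _ Δ g hΔ hg => isForget_bigOr hΔ hg⟩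
  choose! forget hforget using H
  have hfin := (finite_DP φ.atoms φ.depth).subset
    (Set.sep_subset _ fun δ => SatL L δ ∧ Entails L δ φ)
  set Δ := hfin.toFinset.toList
  have hΔ : ∀ δ, δ ∈ Δ ↔ δ ∈ DP φ.atoms φ.depth ∧ SatL L δ ∧ Entails L δ φ := fun δ => by
    rw [Finset.mem_toList, hfin.mem_toFinset]; rfl
  have hforgetΔ : ∀ δ ∈ Δ,
      SatL L (forget φ.atoms φ.depth δ p) ∧ IsForget L δ p (forget φ.atoms φ.depth δ p) :=
    fun δ hδ => hforget _ _ δ p ((hΔ δ).1 hδ).1 ((hΔ δ).1 hδ).2.1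
  obtain ⟨W, M, s, hM, hs⟩ := hφ
  obtain ⟨δ, hδ, -⟩ := exists_mem_sat_of_sat hΔ hM hs
  obtain ⟨W', M', s', hM', hs'⟩ := (hforgetΔ δ hδ).1
  refine ⟨bigOr (Δ.map fun δ => forget φ.atoms φ.depth δ p), ?_,
    isForget_bigOr hΔ fun δ hδ => (hforgetΔ δ hδ).2⟩
  exact ⟨W', M', s', hM', sat_bigOr.2 ⟨_, List.mem_map_of_mem hδ, hs'⟩⟩

end DKLogic
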